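/- (Antisymmetry) For every integer q ≥ 2, all T ∈ ℤ and all d ∈ ℤ: ∑_{s ∈ S̄(T,M+1,d)} q^{−K(s)} = ∑_{s' ∈ S̄(M−T,M+1,−d)} q^{−K(s')}, where both sums are taken in [0,∞]. -/

import Mathlib

open scoped Classical ENNReal
open Filter

namespace BDM

/-- Augmented BDM state set `S̄`: batteries `b 1, …, b M` (entries outside `{1,…,M}`
are fixed to `0`), drain `d`, time residue `T`, ministep `t ∈ {1,…,M+1}`, and the
invariant `d + T + ∑ b_m = 0`. -/
structure St (M : ℕ) where
  b : ℕ → ℤ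
  d : ℤ
  T : ℤ
  t : ℕ
  ht1 : 1 ≤ t
  ht2 : t ≤ M + 1
  hb0 : ∀ m, m = 0 ∨ M < m → b m = 0
  inv : d + T + ∑ m ∈ Finset.range M, b (m + 1) = 0

/-- Membership in the (restricted) state set `S`: `0 ≤ T ≤ M`. -/
def inS {M : ℕ} (s : St M) : Prop := 0 ≤ s.T ∧ s.T ≤ (M : ℤ)

/-- The initial state `s₀ = (0,…,0,0;0,M+1)`. -/
def init (M : ℕ) : St M where
  b := fun _ => 0
  d := 0
  T := 0
  t := M + 1
  ht1 := Nat.le_add_left 1 M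
  ht2 := le_refl _
  hb0 := fun _ _ => rfl
  inv := by simp

/-- The six actions of the BDM. -/
inductive Act : Type
  | D | I | Ne | Nl | dm | bp
deriving DecidableEq

/-- Feasible transitions of the BDM. -/
def Step {M : ℕ} (s : St M) : Act → St M → Prop
  | .D, s' => s.t ≤ M ∧ s.d < s.b s.t ∧ s'.t = s.t + 1 ∧ s'.T = s.T ∧
      s'.d = s.b s.t ∧ s'.b = Function.update s.b s.t s.d
  | .I, s' => s.t ≤ M ∧ s.d < s.b s.t ∧ s'.t = s.t + 1 ∧ s'.T = s.T ∧
      s'.d = s.d ∧ s'.b = s.b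
  | .Ne, s' => s.t ≤ M ∧ s.b s.t = s.d ∧ s'.t = s.t + 1 ∧ s'.T = s.T ∧
      s'.d = s.d ∧ s'.b = s.b
  | .Nl, s' => s.t ≤ M ∧ s.b s.t < s.d ∧ s'.t = s.t + 1 ∧ s'.T = s.T ∧
      s'.d = s.d ∧ s'.b = s.b
  | .dm, s' => s.t = M + 1 ∧ s.T < M ∧ s'.t = 1 ∧ s'.T = s.T + 1 ∧
      s'.d = s.d - 1 ∧ s'.b = s.b
  | .bp, s' => s.t = M + 1 ∧ s.T = M ∧ s'.t = 1 ∧ s'.T = 0 ∧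
      s'.d = s.d ∧ s'.b = fun m => if 1 ≤ m ∧ m ≤ M then s.b m + 1 else 0

/-- The `(M+1)`-tuple `(b_1,…,b_{t−1},d,b_t,…,b_M)` as a list. -/
def tuple {M : ℕ} (s : St M) : List ℤ :=
  ((List.range M).map (fun m => s.b (m + 1))).insertIdx (s.t - 1) s.d

/-- One transposition of adjacent entries of a list. -/
def AdjSwap (l l' : List ℤ) : Prop :=
  ∃ l₁ x y l₂, l = l₁ ++ x :: y :: l₂ ∧ l' = l₁ ++ y :: x :: l₂

/-- The set of numbers `n` such that `l` can be sorted into nonincreasing order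
by `n` transpositions of adjacent entries. -/
def SortCost (l : List ℤ) : Set ℕ :=
  {n | ∃ f : ℕ → List ℤ, f 0 = l ∧ (∀ i < n, AdjSwap (f i) (f (i + 1))) ∧
        (f n).Pairwise (· ≥ ·)}

/-- `π_l`: the minimal number of adjacent transpositions needed to sort `l`
into nonincreasing order. -/
noncomputable def piMin (l : List ℤ) : ℕ := sInf (SortCost l)

/-- The nonincreasing rearrangement of a list. -/
def sortedTuple (l : List ℤ) : List ℤ := l.insertionSort (· ≥ ·)

/-- The class `K(s) = −π_s + M·T + 2·∑_{m=1}^{M+1} b̃_m·(M+1−m)`. -/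
noncomputable def Kc {M : ℕ} (s : St M) : ℤ :=
  -(piMin (tuple s) : ℤ) + (M : ℤ) * s.T +
    2 * ∑ i ∈ Finset.range (M + 1), (sortedTuple (tuple s)).getD i 0 * ((M : ℤ) - i)

/-- The transition matrix `𝒯(s,s')` of the BDM, with values in `ℝ≥0∞`. -/
noncomputable def Tmat (M q : ℕ) (s s' : St M) : ℝ≥0∞ :=
  if Step s .D s' then ((q : ℝ≥0∞) - 1) / q
  else if Step s .I s' then 1 / q
  else if (Step s .Ne s' ∨ Step s .Nl s' ∨ Step s .dm s' ∨ Step s .bp s') then 1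
  else 0

/-- The state set `S` as a subtype. -/
def SS (M : ℕ) : Type := {s : St M // inS s}

/-- The mass distributions `μ_τ` on `S`: `μ_0` is the point mass at `s₀` and
`μ_{τ+1}(s') = ∑_{s∈S} 𝒯(s,s')·μ_τ(s)`. -/
noncomputable def mu (M q : ℕ) : ℕ → SS M → ℝ≥0∞
  | 0, s => if s.1 = init M then 1 else 0
  | τ + 1, s' => ∑' s : SS M, Tmat M q s.1 s'.1 * mu M q τ s

/-- The asymptotic measure `μ_∞(s) = limsup_{τ→∞} μ_τ(s)`. -/
noncomputable def muInf (M q : ℕ) (s : SS M) : ℝ≥0∞ :=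
  Filter.atTop.limsup (fun τ => mu M q τ s)

end BDM

namespace BDMaux
open BDM

/-- inversion count: pairs i<j with l_i < l_j -/
def invc : List ℤ → ℕ
  | [] => 0
  | x :: xs => xs.countP (fun y => decide (x < y)) + invc xs

/-- dual inversion count: pairs i<j with l_j < l_i -/
def invd : List ℤ → ℕ
  | [] => 0
  | x :: xs => xs.countP (fun y => decide (y < x)) + invd xs

/-- sum over unordered pairs of positions of max of values -/
def Pm : List ℤ → ℤ
  | [] => 0
  | x :: xs => (xs.map (fun y => max x y)).sum + Pm xs

lemma invc_append (l₁ l₂ : List ℤ) :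
    invc (l₁ ++ l₂) = invc l₁ + invc l₂ +
      (l₁.map (fun a => l₂.countP (fun y => decide (a < y)))).sum := by
  induction l₁ with
  | nil => simp [invc]
  | cons a l₁ ih =>
      simp only [List.cons_append, invc, List.countP_append, ih, List.map_cons, List.sum_cons,
        List.append_eq]
      ring

lemma invc_singleton (x : ℤ) : invc [x] = 0 := by simp [invc]

lemma sum_map_ite (l : List ℤ) (p : ℤ → Prop) [DecidablePred p] :
    (l.map (fun a => if p a then (1 : ℕ) else 0)).sum = l.countP (fun a => decide (p a)) := by
  induction l with
  | nil => simp
  | cons a l ih =>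
      simp only [List.map_cons, List.sum_cons, List.countP_cons, ih, decide_eq_true_eq]
      split <;> omega

lemma invc_append_singleton (l : List ℤ) (d : ℤ) :
    invc (l ++ [d]) = invc l + l.countP (fun a => decide (a < d)) := by
  rw [invc_append, invc_singleton]
  have h1 : ∀ a : ℤ, List.countP (fun y => decide (a < y)) [d] = if a < d then 1 else 0 := by
    intro a
    simp only [List.countP_cons, List.countP_nil, decide_eq_true_eq, Nat.zero_add]
  simp only [h1, sum_map_ite]
  omega

lemma invc_reverse (l : List ℤ) : invc l.reverse = invd l := by
  induction l with
  | nil => rfl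
  | cons x xs ih =>
      simp only [List.reverse_cons, invc_append_singleton, ih, List.countP_reverse, invd]
      omega

lemma invc_eq_zero_of_sorted {l : List ℤ} (h : l.Pairwise (· ≥ ·)) : invc l = 0 := by
  induction l with
  | nil => rfl
  | cons x xs ih =>
      rw [List.pairwise_cons] at h
      have h2 : xs.countP (fun y => decide (x < y)) = 0 := by
        rw [List.countP_eq_zero]
        intro y hy
        simpa using not_lt_of_ge (h.1 y hy)
      simp [invc, ih h.2, h2]

lemma sorted_of_invc_eq_zero {l : List ℤ} (h : invc l = 0) : l.Pairwise (· ≥ ·) := by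
  induction l with
  | nil => simp
  | cons x xs ih =>
      simp only [invc, Nat.add_eq_zero, List.countP_eq_zero] at h
      rw [List.pairwise_cons]
      exact ⟨fun y hy => by have := h.1 y hy; simpa using this, ih h.2⟩

lemma invc_cons_cons (x y : ℤ) (l₂ : List ℤ) :
    invc (x :: y :: l₂) = (if x < y then 1 else 0) + l₂.countP (fun z => decide (x < z))
      + (l₂.countP (fun z => decide (y < z)) + invc l₂) := by
  simp only [invc, List.countP_cons, decide_eq_true_eq]
  split <;> omega

lemma invc_swap (l₁ l₂ : List ℤ) (x y : ℤ) :
    invc (l₁ ++ x :: y :: l₂) + (if y < x then 1 else 0)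
      = invc (l₁ ++ y :: x :: l₂) + (if x < y then 1 else 0) := by
  rw [invc_append, invc_append]
  have hcnt : (fun a => List.countP (fun z => decide (a < z)) (x :: y :: l₂))
      = (fun a => List.countP (fun z => decide (a < z)) (y :: x :: l₂)) := by
    funext a
    simp only [List.countP_cons]
    omega
  rw [hcnt, invc_cons_cons, invc_cons_cons]
  omega

lemma invc_adjswap {l l' : List ℤ} (h : AdjSwap l l') :
    invc l ≤ invc l' + 1 ∧ invc l' ≤ invc l + 1 := by
  obtain ⟨l₁, x, y, l₂, rfl, rfl⟩ := h
  have h1 := invc_swap l₁ l₂ x y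
  split_ifs at h1 <;> omega

lemma lower_bound : ∀ (n : ℕ) (f : ℕ → List ℤ), (∀ i < n, AdjSwap (f i) (f (i + 1))) →
    (f n).Pairwise (· ≥ ·) → invc (f 0) ≤ n := by
  intro n
  induction n with
  | zero => intro f _ hs; exact le_of_eq (invc_eq_zero_of_sorted hs)
  | succ n ih =>
      intro f hstep hs
      have h1 : invc (f 0) ≤ invc (f 1) + 1 := (invc_adjswap (hstep 0 (Nat.succ_pos n))).1
      have h2 : invc (f 1) ≤ n :=
        ih (fun i => f (i + 1)) (fun i hi => hstep (i + 1) (by omega)) hs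
      omega

lemma exists_desc : ∀ l : List ℤ,
    l.Pairwise (· ≥ ·) ∨ ∃ l₁ x y l₂, l = l₁ ++ x :: y :: l₂ ∧ x < y := by
  intro l
  induction l with
  | nil => left; simp
  | cons a l ih =>
      rcases ih with hs | ⟨l₁, x, y, l₂, rfl, hxy⟩
      · cases l with
        | nil => left; simp
        | cons b l' =>
            by_cases hab : a < b
            · exact Or.inr ⟨[], a, b, l', by simp, hab⟩
            · left
              have hs' := hs
              rw [List.pairwise_cons] at hs'
              rw [List.pairwise_cons]
              refine ⟨?_, hs⟩
              intro c hc
              rcases List.mem_cons.1 hc with rfl | hc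
              · exact le_of_not_gt hab
              · exact le_trans (hs'.1 c hc) (le_of_not_gt hab)
      · exact Or.inr ⟨a :: l₁, x, y, l₂, by simp, hxy⟩

lemma mem_sortCost : ∀ (n : ℕ) (l : List ℤ), invc l = n → n ∈ SortCost l := by
  intro n
  induction n with
  | zero =>
      intro l hl
      exact ⟨fun _ => l, rfl, fun i hi => absurd hi (Nat.not_lt_zero i),
        sorted_of_invc_eq_zero hl⟩
  | succ n ih =>
      intro l hl
      rcases exists_desc l with hs | ⟨l₁, x, y, l₂, rfl, hxy⟩
      · rw [invc_eq_zero_of_sorted hs] at hl; omega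
      · have hswap := invc_swap l₁ l₂ x y
        rw [if_pos hxy, if_neg (not_lt_of_gt hxy)] at hswap
        have hinv' : invc (l₁ ++ y :: x :: l₂) = n := by omega
        obtain ⟨f, hf0, hstep, hsort⟩ := ih _ hinv'
        refine ⟨fun i => match i with | 0 => l₁ ++ x :: y :: l₂ | j + 1 => f j, rfl, ?_, hsort⟩
        intro i hi
        match i with
        | 0 =>
            show AdjSwap (l₁ ++ x :: y :: l₂) (f 0)
            rw [hf0]
            exact ⟨l₁, x, y, l₂, rfl, rfl⟩
        | j + 1 => exact hstep j (by omega)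

lemma piMin_eq_invc (l : List ℤ) : piMin l = invc l := by
  have hmem : invc l ∈ SortCost l := mem_sortCost (invc l) l rfl
  refine le_antisymm (Nat.sInf_le hmem) (le_csInf ⟨_, hmem⟩ ?_)
  rintro b ⟨f, hf0, hstep, hsort⟩
  have := lower_bound b f hstep hsort
  rwa [hf0] at this

lemma Pm_perm : ∀ {l l' : List ℤ}, l.Perm l' → Pm l = Pm l' := by
  intro l l' h
  induction h with
  | nil => rfl
  | cons a h ih =>
      simp only [Pm, ih]
      congr 1
      exact List.Perm.sum_eq (List.Perm.map _ h)
  | swap a b l =>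
      simp only [Pm, List.map_cons, List.sum_cons]
      rw [max_comm a b]; ring
  | trans _ _ ih1 ih2 => rw [ih1, ih2]

lemma sum_map_add (l : List ℤ) (f g : ℤ → ℤ) :
    (l.map (fun y => f y + g y)).sum = (l.map f).sum + (l.map g).sum := by
  induction l with
  | nil => simp
  | cons a l ih => simp only [List.map_cons, List.sum_cons, ih]; ring

lemma sum_map_const (l : List ℤ) (x : ℤ) :
    (l.map (fun _ => x)).sum = (l.length : ℤ) * x := by
  induction l with
  | nil => simp
  | cons a l ih => simp only [List.map_cons, List.sum_cons, ih, List.length_cons]; push_cast; ring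

lemma Pm_append_singleton (l : List ℤ) (d : ℤ) :
    Pm (l ++ [d]) = Pm l + (l.map (fun a => max a d)).sum := by
  induction l with
  | nil => simp [Pm]
  | cons a l ih =>
      simp only [List.cons_append, Pm, List.map_append, List.map_cons,
        List.map_nil, List.sum_append, List.sum_cons, List.sum_nil, ih, List.append_eq]
      ring

lemma sorted_weight : ∀ (l : List ℤ), l.Pairwise (· ≥ ·) →
    ∑ i ∈ Finset.range l.length, (l.getD i 0) * ((l.length : ℤ) - 1 - i) = Pm l := by
  intro l
  induction l with
  | nil => simp [Pm]
  | cons x xs ih =>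
      intro hs
      rw [List.pairwise_cons] at hs
      rw [List.length_cons, Finset.sum_range_succ']
      have h2 : ∑ k ∈ Finset.range xs.length,
          ((x :: xs).getD (k + 1) 0) * (((xs.length + 1 : ℕ) : ℤ) - 1 - (k + 1 : ℕ))
          = ∑ k ∈ Finset.range xs.length, (xs.getD k 0) * ((xs.length : ℤ) - 1 - k) := by
        refine Finset.sum_congr rfl fun k _ => ?_
        have : (x :: xs).getD (k + 1) 0 = xs.getD k 0 := rfl
        rw [this]
        push_cast
        ring
      rw [h2, ih hs.2]
      have h3 : (xs.map (fun y => max x y)).sum = (xs.length : ℤ) * x := by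
        have heq : xs.map (fun y => max x y) = xs.map (fun _ => x) :=
          List.map_congr_left fun y hy => max_eq_left (hs.1 y hy)
        rw [heq, sum_map_const]
      simp only [Pm, h3, List.getD_cons_zero]
      push_cast
      ring


lemma invd_map_neg (l : List ℤ) : invd (l.map (fun a => -a - 1)) = invc l := by
  induction l with
  | nil => rfl
  | cons x xs ih =>
      simp only [List.map_cons, invd, invc, ih, List.countP_map]
      congr 1
      refine List.countP_congr fun y _ => ?_
      simp only [Function.comp_apply, decide_eq_true_eq]
      constructor <;> intro h <;> [omega; omega]

lemma invc_rev_map (l : List ℤ) : invc ((l.map (fun a => -a - 1)).reverse) = invc l := by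
  rw [invc_reverse, invd_map_neg]

lemma countP_rev_map (l : List ℤ) (d : ℤ) :
    ((l.map (fun a => -a - 1)).reverse).countP (fun a => decide (a < -d))
      = l.length - l.countP (fun a => decide (a < d)) := by
  rw [List.countP_reverse, List.countP_map]
  have h1 : List.countP ((fun a => decide (a < -d)) ∘ (fun a : ℤ => -a - 1)) l
      = List.countP (fun a => !decide (a < d)) l := by
    refine List.countP_congr fun y _ => ?_
    simp only [Function.comp_apply, Bool.not_eq_true', decide_eq_true_eq, decide_eq_false_iff_not]
    constructor <;> intro h <;> omega
  rw [h1]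
  have h2 : ∀ m : List ℤ, List.countP (fun a => !decide (a < d)) m
      + List.countP (fun a : ℤ => decide (a < d)) m = m.length := by
    intro m
    induction m with
    | nil => rfl
    | cons a t iht =>
        simp only [List.countP_cons, List.length_cons]
        cases h : decide (a < d) <;> simp [h] <;> omega
  have h3 := h2 l
  omega

lemma sum_map_neg (l : List ℤ) : (l.map fun y => -y).sum = -l.sum := by
  induction l with
  | nil => simp
  | cons a t iht => simp only [List.map_cons, List.sum_cons, iht]; ring

lemma Pm_map_neg (l : List ℤ) :
    2 * Pm (l.map (fun a => -a - 1))
      = 2 * Pm l - 2 * (l.length : ℤ) * l.sum + 2 * l.sum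
        - (l.length : ℤ) * ((l.length : ℤ) - 1) := by
  induction l with
  | nil => simp [Pm]
  | cons x xs ih =>
      simp only [List.map_cons, Pm, List.sum_cons, List.length_cons]
      have h1 : ((xs.map (fun a => -a - 1)).map (fun y => (-x - 1) ⊔ y)).sum
          = (xs.map fun y => (x ⊔ y) - x - y - 1).sum := by
        rw [List.map_map]
        refine congrArg List.sum (List.map_congr_left fun y _ => ?_)
        simp only [Function.comp_apply]
        rcases le_total x y with h | h
        · rw [max_eq_right h, max_eq_left (by omega : -y - 1 ≤ -x - 1)]; ring
        · rw [max_eq_left h, max_eq_right (by omega : -x - 1 ≤ -y - 1)]; ring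
      have h2 : (xs.map fun y => (x ⊔ y) - x - y - 1).sum
          = (xs.map fun y => x ⊔ y).sum - (xs.length : ℤ) * x - xs.sum - xs.length := by
        have : (xs.map fun y => (x ⊔ y) - x - y - 1).sum
            = (xs.map fun y => x ⊔ y).sum + ((xs.map fun y => -x - y - 1).sum) := by
          rw [← sum_map_add]
          exact congrArg List.sum (List.map_congr_left fun y _ => by ring)
        rw [this]
        have : (xs.map fun y => -x - y - 1).sum
            = (xs.map fun _ => -x - 1).sum + (xs.map fun y => -y).sum := by
          rw [← sum_map_add]
          exact congrArg List.sum (List.map_congr_left fun y _ => by ring)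
        rw [this, sum_map_const, sum_map_neg]
        ring
      have hc : (List.map (fun a => -a - 1) xs) = (xs.map fun a => -a - 1) := rfl
      rw [h1, h2]
      push_cast
      have := ih
      push_cast at this
      linarith [this]

lemma sum_map_max_neg (l : List ℤ) (d : ℤ) :
    (l.map (fun a => (-a - 1) ⊔ (-d))).sum
      = (l.map (fun a => a ⊔ d)).sum - l.sum - (l.length : ℤ) * d
        - (l.countP (fun a => decide (a < d)) : ℤ) := by
  induction l with
  | nil => simp
  | cons x xs ih =>
      simp only [List.map_cons, List.sum_cons, ih, List.length_cons, List.countP_cons,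
        decide_eq_true_eq]
      have hkey : (-x - 1) ⊔ (-d) = x ⊔ d - x - d - (if x < d then 1 else 0) := by
        rcases lt_or_ge x d with h | h
        · rw [if_pos h, max_eq_right h.le, max_eq_left (by omega : -d ≤ -x - 1)]; ring
        · rw [if_neg (not_lt.mpr h), max_eq_left h, max_eq_right (by omega : -x - 1 ≤ -d)]; ring
      rw [hkey]
      split_ifs <;> push_cast <;> ring

lemma list_range_sum (n : ℕ) (f : ℕ → ℤ) :
    ((List.range n).map f).sum = ∑ i ∈ Finset.range n, f i := by
  induction n with
  | zero => simp
  | succ n ih => rw [List.range_succ, Finset.sum_range_succ]; simp [ih]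

lemma tuple_eq {M : ℕ} (s : St M) (ht : s.t = M + 1) :
    tuple s = ((List.range M).map (fun m => s.b (m + 1))) ++ [s.d] := by
  have hlen : ((List.range M).map (fun m => s.b (m + 1))).length = M := by simp
  show ((List.range M).map (fun m => s.b (m + 1))).insertIdx (s.t - 1) s.d = _
  rw [ht]
  have h1 : M + 1 - 1 = ((List.range M).map (fun m => s.b (m + 1))).length := by
    rw [hlen]
    omega
  rw [h1, List.insertIdx_length_self]

lemma Kc_eq {M : ℕ} (s : St M) (ht : s.t = M + 1) :
    Kc s = -(invc (tuple s) : ℤ) + (M : ℤ) * s.T + 2 * Pm (tuple s) := by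
  have hlen : (tuple s).length = M + 1 := by
    show (((List.range M).map (fun m => s.b (m + 1))).insertIdx (s.t - 1) s.d).length = M + 1
    rw [List.length_insertIdx, if_pos (by simp; omega)]
    simp
  have hslen : (sortedTuple (tuple s)).length = M + 1 := by
    rw [sortedTuple, List.length_insertionSort, hlen]
  have hsort : (sortedTuple (tuple s)).Pairwise (· ≥ ·) :=
    List.pairwise_insertionSort _ _
  have hw := sorted_weight _ hsort
  rw [hslen] at hw
  have hPm : Pm (sortedTuple (tuple s)) = Pm (tuple s) :=
    Pm_perm (List.perm_insertionSort _ _)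
  simp only [Kc, piMin_eq_invc]
  have hsum : ∑ i ∈ Finset.range (M + 1), (sortedTuple (tuple s)).getD i 0 * ((M : ℤ) - i)
      = Pm (tuple s) := by
    rw [← hPm, ← hw]
    refine Finset.sum_congr rfl fun i _ => ?_
    push_cast
    ring
  rw [hsum]

/-- The K-preserving involution. -/
def flip {M : ℕ} (s : St M) : St M where
  b := fun m => if 1 ≤ m ∧ m ≤ M then -s.b (M + 1 - m) - 1 else 0
  d := -s.d
  T := (M : ℤ) - s.T
  t := M + 1
  ht1 := Nat.le_add_left 1 M
  ht2 := le_refl _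
  hb0 := by
    intro m hm
    show (if 1 ≤ m ∧ m ≤ M then -s.b (M + 1 - m) - 1 else 0) = 0
    rw [if_neg (by omega)]
  inv := by
    have h1 : ∑ m ∈ Finset.range M,
        (if 1 ≤ m + 1 ∧ m + 1 ≤ M then -s.b (M + 1 - (m + 1)) - 1 else 0)
        = ∑ m ∈ Finset.range M, (-s.b (M - m) - 1) := by
      refine Finset.sum_congr rfl fun m hm => ?_
      rw [Finset.mem_range] at hm
      rw [if_pos ⟨by omega, by omega⟩]
      have : M + 1 - (m + 1) = M - m := by omega
      rw [this]
    have h2 : ∑ m ∈ Finset.range M, s.b (M - m) = ∑ m ∈ Finset.range M, s.b (m + 1) := by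
      refine Eq.trans ?_ (Finset.sum_range_reflect (fun m => s.b (m + 1)) M)
      refine Finset.sum_congr rfl fun m hm => ?_
      rw [Finset.mem_range] at hm
      congr 1
      omega
    have h3 : ∑ m ∈ Finset.range M, (-s.b (M - m) - 1)
        = -(∑ m ∈ Finset.range M, s.b (M - m)) - M := by
      rw [Finset.sum_sub_distrib, ← Finset.sum_neg_distrib]
      simp
    have hinv := s.inv
    show -s.d + ((M : ℤ) - s.T) + ∑ m ∈ Finset.range M,
        (if 1 ≤ m + 1 ∧ m + 1 ≤ M then -s.b (M + 1 - (m + 1)) - 1 else 0) = 0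
    rw [h1, h3, h2]
    linarith

lemma St.ext' {M : ℕ} {s1 s2 : St M} (hb : s1.b = s2.b) (hd : s1.d = s2.d)
    (hT : s1.T = s2.T) (htt : s1.t = s2.t) : s1 = s2 := by
  cases s1
  cases s2
  simp_all

lemma flip_flip {M : ℕ} (s : St M) (ht : s.t = M + 1) : flip (flip s) = s := by
  refine St.ext' ?_ (neg_neg s.d) (by show (M : ℤ) - ((M : ℤ) - s.T) = s.T; ring) ht.symm
  funext m
  show (if 1 ≤ m ∧ m ≤ M then -(flip s).b (M + 1 - m) - 1 else 0) = s.b m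
  by_cases h : 1 ≤ m ∧ m ≤ M
  · rw [if_pos h]
    show -(if 1 ≤ M + 1 - m ∧ M + 1 - m ≤ M then -s.b (M + 1 - (M + 1 - m)) - 1 else 0) - 1
        = s.b m
    rw [if_pos ⟨by omega, by omega⟩]
    have : M + 1 - (M + 1 - m) = m := by omega
    rw [this]
    ring
  · rw [if_neg h]
    exact (s.hb0 m (by omega)).symm

lemma flip_tuple_list {M : ℕ} (s : St M) :
    (List.range M).map (fun m => (flip s).b (m + 1))
      = ((((List.range M).map (fun m => s.b (m + 1))).map (fun a => -a - 1)).reverse) := by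
  refine List.ext_getElem (by simp) fun i h1 h2 => ?_
  simp only [List.length_map, List.length_range] at h1
  rw [List.getElem_map, List.getElem_range, List.getElem_reverse, List.getElem_map,
    List.getElem_map, List.getElem_range]
  show (if 1 ≤ i + 1 ∧ i + 1 ≤ M then -s.b (M + 1 - (i + 1)) - 1 else 0) = _
  rw [if_pos ⟨by omega, by omega⟩]
  simp only [List.length_map, List.length_range]
  have e1 : M + 1 - (i + 1) = M - 1 - i + 1 := by omega
  rw [e1]

lemma Kc_flip {M : ℕ} (s : St M) (ht : s.t = M + 1) : Kc (flip s) = Kc s := by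
  set c : List ℤ := (List.range M).map (fun m => s.b (m + 1)) with hc
  have hclen : c.length = M := by simp [hc]
  have hcsum : c.sum = -s.d - s.T := by
    have h := s.inv
    have h2 : c.sum = ∑ m ∈ Finset.range M, s.b (m + 1) := list_range_sum M _
    linarith
  have htup : tuple s = c ++ [s.d] := tuple_eq s ht
  have htup' : tuple (flip s) = ((c.map (fun a => -a - 1)).reverse) ++ [-s.d] := by
    rw [tuple_eq (flip s) rfl]
    show ((List.range M).map (fun m => (flip s).b (m + 1))) ++ [-s.d] = _
    rw [flip_tuple_list]
  rw [Kc_eq s ht, Kc_eq (flip s) rfl, htup, htup']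
  rw [invc_append_singleton, invc_append_singleton,
    Pm_append_singleton, Pm_append_singleton]
  rw [invc_rev_map, countP_rev_map, hclen]
  have hPrev : Pm ((c.map (fun a => -a - 1)).reverse) = Pm (c.map (fun a => -a - 1)) :=
    Pm_perm (List.reverse_perm _)
  rw [hPrev]
  have hmaxperm : (((c.map (fun a => -a - 1)).reverse).map (fun a => a ⊔ (-s.d))).sum
      = ((c.map (fun a => -a - 1)).map (fun a => a ⊔ (-s.d))).sum :=
    List.Perm.sum_eq (List.Perm.map _ (List.reverse_perm _))
  rw [hmaxperm]
  have hmm : ((c.map (fun a => -a - 1)).map (fun a => a ⊔ (-s.d))).sum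
      = (c.map (fun a => (-a - 1) ⊔ (-s.d))).sum := by
    rw [List.map_map]
    rfl
  rw [hmm, sum_map_max_neg]
  have hPmn := Pm_map_neg c
  rw [hclen] at hPmn
  have hNle : c.countP (fun a => decide (a < s.d)) ≤ M := by
    have := List.countP_le_length (p := fun a => decide (a < s.d)) (l := c)
    omega
  have hTflip : (flip s).T = (M : ℤ) - s.T := rfl
  have hdflip : (flip s).d = -s.d := rfl
  rw [hTflip]
  simp only [hclen]
  push_cast [Nat.cast_sub hNle]
  linear_combination hPmn - 2 * (M : ℤ) * hcsum

end BDMaux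

open BDM in
/-- Antisymmetry: for every integer `q ≥ 2` and all `T, d ∈ ℤ`,
`∑_{s ∈ S̄(T,M+1,d)} q^{−K(s)} = ∑_{s' ∈ S̄(M−T,M+1,−d)} q^{−K(s')}`,
both sums taken in `[0,∞]`. -/
theorem bdm_antisymmetry_sum (M : ℕ) (hM : 1 ≤ M) (q : ℕ) (hq : 2 ≤ q)
    (T d : ℤ) :
    ∑' s : {s : St M // s.T = T ∧ s.t = M + 1 ∧ s.d = d},
        (q : ℝ≥0∞) ^ (-(Kc s.1))
      = ∑' s : {s : St M // s.T = (M : ℤ) - T ∧ s.t = M + 1 ∧ s.d = -d},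
          (q : ℝ≥0∞) ^ (-(Kc s.1)) := by
  let e : {s : St M // s.T = T ∧ s.t = M + 1 ∧ s.d = d}
      ≃ {s : St M // s.T = (M : ℤ) - T ∧ s.t = M + 1 ∧ s.d = -d} :=
    { toFun := fun s => ⟨BDMaux.flip s.1, by
        refine ⟨?_, rfl, ?_⟩
        · show (M : ℤ) - s.1.T = (M : ℤ) - T
          rw [s.2.1]
        · show -s.1.d = -d
          rw [s.2.2.2]⟩
      invFun := fun s => ⟨BDMaux.flip s.1, by
        refine ⟨?_, rfl, ?_⟩
        · show (M : ℤ) - s.1.T = T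
          rw [s.2.1]; ring
        · show -s.1.d = d
          rw [s.2.2.2]; ring⟩
      left_inv := fun s => Subtype.ext (BDMaux.flip_flip s.1 s.2.2.1)
      right_inv := fun s => Subtype.ext (BDMaux.flip_flip s.1 s.2.2.1) }
  calc ∑' s : {s : St M // s.T = T ∧ s.t = M + 1 ∧ s.d = d}, (q : ℝ≥0∞) ^ (-(Kc s.1))
      = ∑' s : {s : St M // s.T = T ∧ s.t = M + 1 ∧ s.d = d},
          (q : ℝ≥0∞) ^ (-(Kc ((e s) : {s : St M // s.T = (M : ℤ) - T ∧ s.t = M + 1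
            ∧ s.d = -d}).1)) := by
        refine tsum_congr fun s => ?_
        have : ((e s) : {s : St M // s.T = (M : ℤ) - T ∧ s.t = M + 1 ∧ s.d = -d}).1
            = BDMaux.flip s.1 := rfl
        rw [this, BDMaux.Kc_flip s.1 s.2.2.1]
    _ = ∑' s : {s : St M // s.T = (M : ℤ) - T ∧ s.t = M + 1 ∧ s.d = -d},
          (q : ℝ≥0∞) ^ (-(Kc s.1)) :=
        Equiv.tsum_eq e (fun s' => (q : ℝ≥0∞) ^ (-(Kc s'.1)))
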